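/- arXiv:2509.22495 — 2 statements merged into one kernel-verified Lean document; each statement's English description precedes it below -/
import Mathlib

section
/- Let N ≥ 1, p ≥ 1, fix q ∈ {0, …, N-1} and set ω = Complex.exp (2 * π * Complex.I * q / N). Let τ : Fin N → ℝ be delays, Υ a p × p complex matrix, W : Fin N → ℝ → Matrix (Fin p) (Fin p) ℂ a family of time-dependent p × p matrices, and C the N × N cyclic shift matrix (C_{ij} = 1 if j ≡ i+1 (mod N), else 0). Let ξ : ℝ → (Fin p → ℂ) be differentiable and define Y : ℝ → (Fin N × Fin p → ℂ) by Y t (j, a) = ω ^ (j : ℕ) * ξ t a (i.e. Y(t) = e_q ⊗ ξ(t)). Then Y satisfies the full network variational system deriv Y t = -((1 : Matrix (Fin N) (Fin N) ℂ) ⊗ₖ Υ).mulVec (Y t) + ∑_{k=0}^{N-1} ((C ^ k) ⊗ₖ (Υ * W k t)).mulVec (Y (t - τ k)) for all t if and only if ξ satisfies the decoupled p-dimensional block equation deriv ξ t = Υ.mulVec (-(ξ t) + ∑_{k=0}^{N-1} ω ^ k • ((W k t).mulVec (ξ (t - τ k)))) for all t. -/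
open Matrix Kronecker

lemma kron_mulVec_pure {N p : ℕ} (A : Matrix (Fin N) (Fin N) ℂ)
    (M : Matrix (Fin p) (Fin p) ℂ) (u : Fin N → ℂ) (v : Fin p → ℂ)
    (j : Fin N) (a : Fin p) :
    ((A ⊗ₖ M).mulVec (fun ja => u ja.1 * v ja.2)) (j, a)
      = (A.mulVec u j) * (M.mulVec v a) := by
  simp only [Matrix.mulVec, dotProduct, Matrix.kroneckerMap_apply,
    Fintype.sum_prod_type]
  rw [Finset.sum_mul_sum]
  exact Finset.sum_congr rfl fun _ _ => Finset.sum_congr rfl fun _ _ => by ring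

lemma shift_pow_eig {N : ℕ} (hN : 1 ≤ N) (C : Matrix (Fin N) (Fin N) ℂ)
    (hC : ∀ i j : Fin N, C i j = if (j : ℕ) % N = ((i : ℕ) + 1) % N then 1 else 0)
    (ω : ℂ) (hω1 : ω ^ N = 1) (k : ℕ) (j : Fin N) :
    (C ^ k).mulVec (fun i : Fin N => ω ^ (i : ℕ)) j = ω ^ k * ω ^ (j : ℕ) := by
  induction k with
  | zero => simp [Matrix.one_mulVec]
  | succ k ih =>
    have hCe : C.mulVec (fun i : Fin N => ω ^ (i : ℕ))
        = fun i : Fin N => ω * ω ^ (i : ℕ) := by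
      funext i
      have hNpos : 0 < N := hN
      have hm : ((i : ℕ) + 1) % N < N := Nat.mod_lt _ hNpos
      have : C.mulVec (fun i : Fin N => ω ^ (i : ℕ)) i
          = ∑ j' : Fin N, (if (j' : ℕ) % N = ((i : ℕ) + 1) % N then 1 else 0) * ω ^ (j' : ℕ) := by
        simp [Matrix.mulVec, dotProduct, hC]
      rw [this, Finset.sum_eq_single (⟨((i : ℕ) + 1) % N, hm⟩ : Fin N)]
      · rw [if_pos (Nat.mod_mod_of_dvd _ dvd_rfl)]
        rw [one_mul]
        have := (pow_eq_pow_mod ((i : ℕ) + 1) hω1).symm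
        simpa [pow_succ, mul_comm] using this
      · intro b _ hb
        rw [if_neg, zero_mul]
        intro hcontra
        apply hb
        apply Fin.ext
        simpa [Nat.mod_eq_of_lt b.isLt] using hcontra
      · intro h; exact absurd (Finset.mem_univ _) h
    calc (C ^ (k + 1)).mulVec (fun i : Fin N => ω ^ (i : ℕ)) j
        = (C ^ k * C).mulVec (fun i : Fin N => ω ^ (i : ℕ)) j := by rw [pow_succ]
      _ = (C ^ k).mulVec (C.mulVec (fun i : Fin N => ω ^ (i : ℕ))) j := by
          rw [Matrix.mulVec_mulVec]
      _ = ω ^ (k + 1) * ω ^ (j : ℕ) := by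
          rw [hCe]
          have : (fun i : Fin N => ω * ω ^ (i : ℕ)) = ω • (fun i : Fin N => ω ^ (i : ℕ)) := by
            funext i; simp [smul_eq_mul]
          rw [this, Matrix.mulVec_smul, Pi.smul_apply, smul_eq_mul, ih]
          ring

lemma mulVec_finsum {p : ℕ} {ι : Type*} (s : Finset ι) (Υ : Matrix (Fin p) (Fin p) ℂ)
    (f : ι → (Fin p → ℂ)) :
    Υ.mulVec (∑ k ∈ s, f k) = ∑ k ∈ s, Υ.mulVec (f k) := by
  funext a
  simp only [Finset.sum_apply, Matrix.mulVec, dotProduct, Finset.mul_sum]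
  exact Finset.sum_comm

/-- A Kronecker-product perturbation `Y(t) = e_q ⊗ ξ(t)` (with
`(e_q)_j = ω_q^j`, `ω_q = exp(2πi q/N)`) satisfies the full linearized
ring-network delay system
`Y'(t) = -(I_N ⊗ Υ) Y(t) + ∑_k (C^k ⊗ Υ W_k(t)) Y(t - τ_k)`
if and only if `ξ` satisfies the decoupled `p`-dimensional block equation
`ξ'(t) = Υ[-ξ(t) + ∑_k ω_q^k W_k(t) ξ(t - τ_k)]`. -/
theorem network_variational_block_mode
    (N p : ℕ) (hN : 1 ≤ N) (hp : 1 ≤ p) (q : Fin N)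
    (ω : ℂ) (hω : ω = Complex.exp (2 * (Real.pi : ℂ) * Complex.I * (q : ℕ) / (N : ℂ)))
    (τ : Fin N → ℝ) (Υ : Matrix (Fin p) (Fin p) ℂ)
    (W : Fin N → ℝ → Matrix (Fin p) (Fin p) ℂ)
    (C : Matrix (Fin N) (Fin N) ℂ)
    (hC : ∀ i j : Fin N, C i j = if (j : ℕ) % N = ((i : ℕ) + 1) % N then 1 else 0)
    (ξ : ℝ → (Fin p → ℂ)) (hξ : Differentiable ℝ ξ)
    (Y : ℝ → (Fin N × Fin p → ℂ))
    (hY : ∀ t : ℝ, ∀ ja : Fin N × Fin p, Y t ja = ω ^ (ja.1 : ℕ) * ξ t ja.2) :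
    (∀ t : ℝ, deriv Y t
        = -((1 : Matrix (Fin N) (Fin N) ℂ) ⊗ₖ Υ).mulVec (Y t)
          + ∑ k : Fin N, ((C ^ (k : ℕ)) ⊗ₖ (Υ * W k t)).mulVec (Y (t - τ k)))
    ↔ (∀ t : ℝ, deriv ξ t
        = Υ.mulVec (-(ξ t) + ∑ k : Fin N, ω ^ (k : ℕ) • ((W k t).mulVec (ξ (t - τ k))))) := by
  have hNpos : 0 < N := hN
  have hNne : (N : ℂ) ≠ 0 := Nat.cast_ne_zero.mpr (by omega)
  have hωN : ω ^ N = 1 := by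
    rw [hω, ← Complex.exp_nat_mul]
    have : (N : ℂ) * (2 * (Real.pi : ℂ) * Complex.I * (q : ℕ) / (N : ℂ))
        = (q : ℕ) * (2 * (Real.pi : ℂ) * Complex.I) := by
      field_simp
    rw [this, Complex.exp_nat_mul, Complex.exp_two_pi_mul_I, one_pow]
  have hωne : ω ≠ 0 := by rw [hω]; exact Complex.exp_ne_zero _
  have hYfun : ∀ s : ℝ, Y s = fun ja : Fin N × Fin p => ω ^ (ja.1 : ℕ) * ξ s ja.2 :=
    fun s => funext (hY s)
  have hYeq : Y = fun s (ja : Fin N × Fin p) => ω ^ (ja.1 : ℕ) * ξ s ja.2 := funext hYfun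
  -- derivative of Y
  have hderivY : ∀ t : ℝ, deriv Y t
      = fun ja : Fin N × Fin p => ω ^ (ja.1 : ℕ) * deriv ξ t ja.2 := by
    intro t
    have hd : HasDerivAt ξ (deriv ξ t) t := (hξ t).hasDerivAt
    have hcomp : ∀ a : Fin p, HasDerivAt (fun s => ξ s a) (deriv ξ t a) t :=
      hasDerivAt_pi.1 hd
    have hYd : HasDerivAt Y (fun ja : Fin N × Fin p => ω ^ (ja.1 : ℕ) * deriv ξ t ja.2) t := by
      rw [hYeq]
      exact hasDerivAt_pi.2 fun ja => (hcomp ja.2).const_mul _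
    exact hYd.deriv
  -- componentwise RHS computation
  have hRHS : ∀ (t : ℝ) (j : Fin N) (a : Fin p),
      (-((1 : Matrix (Fin N) (Fin N) ℂ) ⊗ₖ Υ).mulVec (Y t)
        + ∑ k : Fin N, ((C ^ (k : ℕ)) ⊗ₖ (Υ * W k t)).mulVec (Y (t - τ k))) (j, a)
      = ω ^ (j : ℕ)
        * ((Υ.mulVec (-(ξ t) + ∑ k : Fin N, ω ^ (k : ℕ) • ((W k t).mulVec (ξ (t - τ k))))) a) := by
    intro t j a
    have hterm1 : (((1 : Matrix (Fin N) (Fin N) ℂ) ⊗ₖ Υ).mulVec (Y t)) (j, a)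
        = ω ^ (j : ℕ) * (Υ.mulVec (ξ t)) a := by
      rw [hYfun t]
      have := kron_mulVec_pure (1 : Matrix (Fin N) (Fin N) ℂ) Υ
        (fun i : Fin N => ω ^ (i : ℕ)) (ξ t) j a
      rw [Matrix.one_mulVec] at this
      exact this
    have htermk : ∀ k : Fin N,
        (((C ^ (k : ℕ)) ⊗ₖ (Υ * W k t)).mulVec (Y (t - τ k))) (j, a)
        = ω ^ (j : ℕ) * (ω ^ (k : ℕ) * (Υ.mulVec ((W k t).mulVec (ξ (t - τ k)))) a) := by
      intro k
      rw [hYfun (t - τ k)]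
      have := kron_mulVec_pure (C ^ (k : ℕ)) (Υ * W k t)
        (fun i : Fin N => ω ^ (i : ℕ)) (ξ (t - τ k)) j a
      rw [shift_pow_eig hN C hC ω hωN (k : ℕ) j, ← Matrix.mulVec_mulVec] at this
      rw [this]
      ring
    have hexp : Υ.mulVec (-(ξ t) + ∑ k : Fin N, ω ^ (k : ℕ) • ((W k t).mulVec (ξ (t - τ k))))
        = -(Υ.mulVec (ξ t))
          + ∑ k : Fin N, ω ^ (k : ℕ) • Υ.mulVec ((W k t).mulVec (ξ (t - τ k))) := by
      rw [Matrix.mulVec_add, Matrix.mulVec_neg, mulVec_finsum]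
      congr 1
      exact Finset.sum_congr rfl fun k _ => by rw [Matrix.mulVec_smul]
    rw [hexp]
    simp only [Pi.add_apply, Pi.neg_apply, Finset.sum_apply, Pi.smul_apply, smul_eq_mul]
    rw [hterm1]
    rw [Finset.sum_congr rfl fun k _ => htermk k]
    rw [← Finset.mul_sum]
    ring
  constructor
  · intro h t
    funext a
    have h0 : (⟨0, hNpos⟩ : Fin N) = ⟨0, hNpos⟩ := rfl
    have ht := congrFun (h t) (⟨0, hNpos⟩, a)
    rw [hderivY t, hRHS t ⟨0, hNpos⟩ a] at ht
    simpa using ht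
  · intro h t
    funext ja
    obtain ⟨j, a⟩ := ja
    rw [hderivY t, hRHS t j a]
    rw [h t]
end

section
/- Let N ≥ 1, p ≥ 1, let τ : Fin N → ℝ be delays, Υ a p × p complex matrix, W : Fin N → ℝ → Matrix (Fin p) (Fin p) ℂ, and C the N × N cyclic shift matrix. Suppose Y : ℝ → (Fin N × Fin p → ℂ) is differentiable and satisfies the full network variational system deriv Y t = -((1 : Matrix (Fin N) (Fin N) ℂ) ⊗ₖ Υ).mulVec (Y t) + ∑_{k=0}^{N-1} ((C ^ k) ⊗ₖ (Υ * W k t)).mulVec (Y (t - τ k)) for all t. Then for every q ∈ {0, …, N-1}, with ω_q = Complex.exp (2 * π * Complex.I * q / N), the projected perturbation ξ_q : ℝ → (Fin p → ℂ) defined by ξ_q t a = ∑_{j=0}^{N-1} ω_q ^ (-(j : ℤ)) * Y t (j, a) satisfies the decoupled block equation deriv (ξ_q) t = Υ.mulVec (-(ξ_q t) + ∑_{k=0}^{N-1} ω_q ^ k • ((W k t).mulVec (ξ_q (t - τ k)))) for all t. Thus the 2N-dimensional linearized network dynamics decouples into N independent p-dimensional blocks indexed by the network modes q. -/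
/-!
The row vector `v j = ω ^ (-j)` is a left eigenvector of the cyclic shift with eigenvalue `ω`,
because `ω ^ N = 1` makes `j ↦ ω ^ (-j)` periodic modulo `N`; hence it is a left eigenvector of
`C ^ k` with eigenvalue `ω ^ k`. Projecting a network state against `v` in the node index turns
`(A ⊗ₖ B) *ᵥ u` into `B` applied to the projection of `u` against `v ᵥ* A`, so every Kronecker
term of the variational system collapses to a `p × p` term, and the projection, being linear,
commutes with differentiation.
-/

open Matrix Kronecker

section ModeProjection

variable {R ι ι' κ κ' : Type*} [CommSemiring R] [Fintype ι]

/-- `modeProjection v u = (vᵀ ⊗ₖ 1) *ᵥ u`. -/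
def modeProjection (v : ι → R) : (ι × κ → R) →ₗ[R] κ → R where
  toFun u a := ∑ j, v j * u (j, a)
  map_add' u w := by ext a; simp only [Pi.add_apply, mul_add, Finset.sum_add_distrib]
  map_smul' c u := by
    ext a
    simp only [Pi.smul_apply, smul_eq_mul, RingHom.id_apply, Finset.mul_sum, mul_left_comm]

lemma modeProjection_apply (v : ι → R) (u : ι × κ → R) (a : κ) :
    modeProjection v u a = ∑ j, v j * u (j, a) := rfl

lemma modeProjection_smul_left (c : R) (v : ι → R) (u : ι × κ → R) :
    modeProjection (c • v) u = c • modeProjection v u := by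
  ext a
  simp only [modeProjection_apply, Pi.smul_apply, smul_eq_mul, Finset.mul_sum, mul_assoc]

lemma modeProjection_kronecker_mulVec [Fintype ι'] [Fintype κ'] (A : Matrix ι ι' R)
    (B : Matrix κ κ' R) (v : ι → R) (u : ι' × κ' → R) :
    modeProjection v ((A ⊗ₖ B) *ᵥ u) = B *ᵥ modeProjection (v ᵥ* A) u := by
  ext a
  simp only [modeProjection_apply, mulVec, vecMul, dotProduct, kroneckerMap_apply,
    Fintype.sum_prod_type, Finset.mul_sum, Finset.sum_mul]
  rw [Finset.sum_comm (s := Finset.univ)]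
  conv_rhs => rw [Finset.sum_comm (s := Finset.univ)]
  refine Finset.sum_congr rfl fun j' _ => ?_
  rw [Finset.sum_comm (s := Finset.univ)]
  exact Finset.sum_congr rfl fun b _ => Finset.sum_congr rfl fun j _ => by ring

end ModeProjection

lemma HasDerivAt.modeProjection {𝕜 R ι κ : Type*} [NontriviallyNormedField 𝕜]
    [NormedCommRing R] [NormedAlgebra 𝕜 R] [Fintype ι] [Fintype κ]
    {Y : 𝕜 → ι × κ → R} {Y' : ι × κ → R} {t : 𝕜}
    (hY : HasDerivAt Y Y' t) (v : ι → R) :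
    HasDerivAt (fun s => modeProjection v (Y s)) (modeProjection v Y') t :=
  hasDerivAt_pi.mpr fun a =>
    HasDerivAt.fun_sum fun j _ => (hasDerivAt_pi.mp hY (j, a)).const_mul (v j)

lemma vecMul_pow_eq_smul_of_vecMul_eq_smul {R n : Type*} [CommSemiring R] [Fintype n]
    [DecidableEq n] {A : Matrix n n R} {v : n → R} {c : R} (hv : v ᵥ* A = c • v) (k : ℕ) :
    v ᵥ* A ^ k = c ^ k • v := by
  induction k with
  | zero => rw [pow_zero, vecMul_one, pow_zero, one_smul]
  | succ k ih => rw [pow_succ, ← vecMul_vecMul, ih, smul_vecMul, hv, smul_smul, pow_succ]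

section CyclicShift

variable {R : Type*} [CommSemiring R] {N : ℕ} [NeZero N] {C : Matrix (Fin N) (Fin N) R}

lemma vecMul_cyclicShift
    (hC : ∀ i j : Fin N, C i j = if (j : ℕ) % N = ((i : ℕ) + 1) % N then 1 else 0)
    (v : Fin N → R) (j : Fin N) : (v ᵥ* C) j = v (j - 1) := by
  have hCj : ∀ i, C i j = if j - 1 = i then 1 else 0 := fun i => by
    refine (hC i j).trans (if_congr ?_ rfl rfl)
    rw [Nat.mod_eq_of_lt j.isLt, ← Nat.add_mod_mod, ← Fin.val_one', ← Fin.val_add, Fin.val_inj,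
      sub_eq_iff_eq_add]
  simp only [vecMul, dotProduct, hCj, mul_ite, mul_one, mul_zero, Finset.sum_ite_eq,
    Finset.mem_univ, if_true]

lemma vecMul_cyclicShift_eq_smul
    (hC : ∀ i j : Fin N, C i j = if (j : ℕ) % N = ((i : ℕ) + 1) % N then 1 else 0)
    {v : Fin N → R} {c : R} (hv : ∀ j, v (j - 1) = c * v j) : v ᵥ* C = c • v :=
  funext fun j => (vecMul_cyclicShift hC v j).trans (hv j)

end CyclicShift

lemma zpow_eq_zpow_of_modEq {G₀ : Type*} [GroupWithZero G₀] {ω : G₀} {N : ℕ} [NeZero N]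
    (hω : ω ^ N = 1) {a b : ℤ} (hab : a ≡ b [ZMOD N]) : ω ^ a = ω ^ b := by
  have hω0 : ω ≠ 0 := ne_zero_pow (NeZero.ne N) (hω ▸ one_ne_zero)
  obtain ⟨k, hk⟩ := hab.dvd
  rw [show b = a + N * k by omega, zpow_add₀ hω0, _root_.zpow_mul, zpow_natCast, hω,
    _root_.one_zpow, mul_one]

lemma zpow_neg_val_sub_one {G₀ : Type*} [GroupWithZero G₀] {ω : G₀} {N : ℕ} [NeZero N]
    (hω : ω ^ N = 1) (j : Fin N) : ω ^ (-((j - 1 : Fin N) : ℤ)) = ω * ω ^ (-(j : ℤ)) := by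
  have hω0 : ω ≠ 0 := ne_zero_pow (NeZero.ne N) (hω ▸ one_ne_zero)
  have hone : (((1 : Fin N) : ℕ) : ℤ) ≡ 1 [ZMOD N] := by
    rw [Fin.val_one', Int.natCast_mod, Nat.cast_one]; exact Int.mod_modEq 1 N
  have hsub : (((j - 1 : Fin N) : ℕ) : ℤ) ≡ j - 1 [ZMOD N] := by
    rw [Fin.coe_int_sub_eq_mod]; exact (Int.mod_modEq _ _).trans (Int.ModEq.rfl.sub hone)
  rw [zpow_eq_zpow_of_modEq hω hsub.neg, neg_sub, sub_eq_add_neg, zpow_add₀ hω0, zpow_one]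

lemma Complex.exp_two_pi_mul_I_mul_div_pow_eq_one (q N : ℕ) :
    Complex.exp (2 * Real.pi * Complex.I * q / N) ^ N = 1 := by
  rcases eq_or_ne N 0 with rfl | hN
  · exact pow_zero _
  rw [show 2 * (Real.pi : ℂ) * Complex.I * q / N = q * (2 * Real.pi * Complex.I / N) by ring,
    Complex.exp_nat_mul, ← pow_mul, mul_comm q N, pow_mul,
    (Complex.isPrimitiveRoot_exp N hN).pow_eq_one, one_pow]

theorem network_variational_decoupling_general
    (N p : ℕ)
    (τ : Fin N → ℝ) (Υ : Matrix (Fin p) (Fin p) ℂ)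
    (W : Fin N → ℝ → Matrix (Fin p) (Fin p) ℂ)
    (C : Matrix (Fin N) (Fin N) ℂ)
    (hC : ∀ i j : Fin N, C i j = if (j : ℕ) % N = ((i : ℕ) + 1) % N then 1 else 0)
    (Y : ℝ → (Fin N × Fin p → ℂ)) (hYdiff : Differentiable ℝ Y)
    (hY : ∀ t : ℝ, deriv Y t
        = -((1 : Matrix (Fin N) (Fin N) ℂ) ⊗ₖ Υ).mulVec (Y t)
          + ∑ k : Fin N, ((C ^ (k : ℕ)) ⊗ₖ (Υ * W k t)).mulVec (Y (t - τ k))) :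
    ∀ (q : Fin N) (ω : ℂ),
      ω = Complex.exp (2 * (Real.pi : ℂ) * Complex.I * (q : ℕ) / (N : ℂ)) →
      ∀ ξ : ℝ → (Fin p → ℂ),
        (∀ t : ℝ, ∀ a : Fin p, ξ t a = ∑ j : Fin N, ω ^ (-(j : ℤ)) * Y t (j, a)) →
        ∀ t : ℝ, deriv ξ t
          = Υ.mulVec (-(ξ t) + ∑ k : Fin N, ω ^ (k : ℕ) • ((W k t).mulVec (ξ (t - τ k)))) := by
  intro q ω hω ξ hξ t
  have : NeZero N := ⟨q.pos.ne'⟩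
  set v : Fin N → ℂ := fun j => ω ^ (-(j : ℤ))
  have hξv : ξ = fun s => modeProjection v (Y s) := funext fun s => funext (hξ s)
  have hωN : ω ^ N = 1 := hω ▸ Complex.exp_two_pi_mul_I_mul_div_pow_eq_one q N
  have hv : ∀ k : ℕ, v ᵥ* C ^ k = ω ^ k • v := vecMul_pow_eq_smul_of_vecMul_eq_smul
    (vecMul_cyclicShift_eq_smul hC (zpow_neg_val_sub_one hωN))
  rw [hξv, ((hYdiff t).hasDerivAt.modeProjection v).deriv, hY t]
  simp only [map_add, map_neg, map_sum, modeProjection_kronecker_mulVec, vecMul_one, hv,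
    modeProjection_smul_left, mulVec_add, mulVec_neg, mulVec_sum, mulVec_smul, mulVec_mulVec]

/-- Diagonalization of the linearized delayed ring network: if `Y` solves the
full network variational system
`Y'(t) = -(I_N ⊗ Υ) Y(t) + ∑_k (C^k ⊗ Υ W_k(t)) Y(t - τ_k)`,
then for every mode `q` the projected perturbation
`ξ_q(t)_a = ∑_j ω_q^{-j} Y(t)_{(j,a)}` (with `ω_q = exp(2πi q/N)`) satisfies
the decoupled `p`-dimensional block equation
`ξ_q'(t) = Υ[-ξ_q(t) + ∑_k ω_q^k W_k(t) ξ_q(t - τ_k)]`. -/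
theorem network_variational_decoupling
    (N p : ℕ) (hN : 1 ≤ N) (hp : 1 ≤ p)
    (τ : Fin N → ℝ) (Υ : Matrix (Fin p) (Fin p) ℂ)
    (W : Fin N → ℝ → Matrix (Fin p) (Fin p) ℂ)
    (C : Matrix (Fin N) (Fin N) ℂ)
    (hC : ∀ i j : Fin N, C i j = if (j : ℕ) % N = ((i : ℕ) + 1) % N then 1 else 0)
    (Y : ℝ → (Fin N × Fin p → ℂ)) (hYdiff : Differentiable ℝ Y)
    (hY : ∀ t : ℝ, deriv Y t
        = -((1 : Matrix (Fin N) (Fin N) ℂ) ⊗ₖ Υ).mulVec (Y t)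
          + ∑ k : Fin N, ((C ^ (k : ℕ)) ⊗ₖ (Υ * W k t)).mulVec (Y (t - τ k))) :
    ∀ (q : Fin N) (ω : ℂ),
      ω = Complex.exp (2 * (Real.pi : ℂ) * Complex.I * (q : ℕ) / (N : ℂ)) →
      ∀ ξ : ℝ → (Fin p → ℂ),
        (∀ t : ℝ, ∀ a : Fin p, ξ t a = ∑ j : Fin N, ω ^ (-(j : ℤ)) * Y t (j, a)) →
        ∀ t : ℝ, deriv ξ t
          = Υ.mulVec (-(ξ t) + ∑ k : Fin N, ω ^ (k : ℕ) • ((W k t).mulVec (ξ (t - τ k)))) :=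
  network_variational_decoupling_general N p τ Υ W C hC Y hYdiff hY
end
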